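/- In the setting of the finite-horizon Riccati recursion with zero terminal value, assume in addition Q = C′C with (A, Q^{1/2}) observable, where A is n×n. Then there exists an integer N_0 ≥ 0 such that Ψ_0(N_0) := (1−p)Z_0(N_0) + pX_0(N_0) is positive definite (and hence, by monotonicity, Ψ_0(N) > 0 for all N ≥ N_0). -/

import Mathlib

/-!
Both recursions are discrete Riccati recursions `P ↦ A′PA + Q − (B′PA)′(B′PB + R)⁻¹(B′PA)`:
the `Z`-recursion for the input matrix `[B^L B^R]`, and the `X`-recursion for `B^L` once
`p = 1` (then `Ψ = X`). Completing the square writes such a step as the closed-loop cost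
`(A − BK)′P(A − BK) + K′RK + Q`, so a vector in the kernel of the new matrix is killed by `Q`
and by `K`, and `A` maps it into the kernel of the old one. Starting from `0`, a vector in the
kernel of the `j`-th iterate therefore satisfies `Q A^i v = 0` for `i < j`, which observability
forbids once `j ≥ n`. For `p < 1`, `Ψ ≥ (1 − p)Z` is then positive definite.
-/

open Matrix

noncomputable section

section OldSqrt

open scoped ComplexOrder

/-- The positive semidefinite square root of a positive semidefinite matrix
(the definition `Matrix.PosSemidef.sqrt` of the older Mathlib, removed since). -/
def Matrix.PosSemidef.sqrt {n 𝕜 : Type*} [Fintype n] [RCLike 𝕜] [DecidableEq n]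
    {A : Matrix n n 𝕜} (hA : A.PosSemidef) : Matrix n n 𝕜 :=
  hA.1.eigenvectorUnitary.1 * diagonal ((↑) ∘ Real.sqrt ∘ hA.1.eigenvalues) *
    (star hA.1.eigenvectorUnitary : Matrix n n 𝕜)

end OldSqrt

namespace NCS13

/-- System data for the networked control system: plant matrices `A, B^L, B^R`,
weight matrices `Q, R^L, R^R` and packet-dropout probability `p`. -/
structure Sys (n mL mR : ℕ) where
  A : Matrix (Fin n) (Fin n) ℝ
  BL : Matrix (Fin n) (Fin mL) ℝ
  BR : Matrix (Fin n) (Fin mR) ℝ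
  Q : Matrix (Fin n) (Fin n) ℝ
  RL : Matrix (Fin mL) (Fin mL) ℝ
  RR : Matrix (Fin mR) (Fin mR) ℝ
  p : ℝ

namespace Sys

variable {n mL mR : ℕ} (S : Sys n mL mR)

/-- The stacked input matrix `[B^L  B^R]`. -/
def Bc : Matrix (Fin n) (Fin mL ⊕ Fin mR) ℝ := fromCols S.BL S.BR

/-- The stacked weight `diag(R^L, R^R)`. -/
def Rc : Matrix (Fin mL ⊕ Fin mR) (Fin mL ⊕ Fin mR) ℝ := fromBlocks S.RL 0 0 S.RR

/-- `Υ = [B^L B^R]′ Z [B^L B^R] + diag(R^L, R^R)`. -/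
def Ups (Z : Matrix (Fin n) (Fin n) ℝ) : Matrix (Fin mL ⊕ Fin mR) (Fin mL ⊕ Fin mR) ℝ :=
  S.Bcᵀ * Z * S.Bc + S.Rc

/-- `K = Υ⁻¹ [B^L B^R]′ Z A`. -/
def Kg (Z : Matrix (Fin n) (Fin n) ℝ) : Matrix (Fin mL ⊕ Fin mR) (Fin n) ℝ :=
  (S.Ups Z)⁻¹ * (S.Bcᵀ * Z * S.A)

/-- `Ψ = (1 − p) Z + p X`. -/
def Psi (Z X : Matrix (Fin n) (Fin n) ℝ) : Matrix (Fin n) (Fin n) ℝ :=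
  (1 - S.p) • Z + S.p • X

/-- `Λ = (B^L)′ Ψ B^L + R^L`. -/
def Lam (Ψ : Matrix (Fin n) (Fin n) ℝ) : Matrix (Fin mL) (Fin mL) ℝ :=
  S.BLᵀ * Ψ * S.BL + S.RL

/-- `M = (B^L)′ Ψ A`. -/
def Mg (Ψ : Matrix (Fin n) (Fin n) ℝ) : Matrix (Fin mL) (Fin n) ℝ :=
  S.BLᵀ * Ψ * S.A

/-- One backward step of the `Z`-Riccati recursion: `A′ZA + Q − K′ΥK`. -/
def Zstep (Z : Matrix (Fin n) (Fin n) ℝ) : Matrix (Fin n) (Fin n) ℝ :=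
  S.Aᵀ * Z * S.A + S.Q - (S.Kg Z)ᵀ * S.Ups Z * S.Kg Z

/-- One backward step of the `X`-Riccati recursion: `A′ΨA + Q − M′Λ⁻¹M`. -/
def Xstep (Ψ : Matrix (Fin n) (Fin n) ℝ) : Matrix (Fin n) (Fin n) ℝ :=
  S.Aᵀ * Ψ * S.A + S.Q - (S.Mg Ψ)ᵀ * (S.Lam Ψ)⁻¹ * S.Mg Ψ

/-- The coupled Riccati recursion in "steps-to-go" form with terminal value `P`:
`ZX P j` is the pair `(Z_k(N), X_k(N))` when `j = N + 1 − k`.  In particular the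
time-invariance `Z_k(N) = Z_{k−s}(N−s)` lets one write `Z_0(N) = (ZX P (N+1)).1`. -/
def ZX (P : Matrix (Fin n) (Fin n) ℝ) : ℕ → Matrix (Fin n) (Fin n) ℝ × Matrix (Fin n) (Fin n) ℝ
  | 0 => (P, P)
  | j + 1 =>
      (S.Zstep (ZX P j).1, S.Xstep (S.Psi (ZX P j).1 (ZX P j).2))

end Sys


end NCS13

section

open scoped ComplexOrder

variable {n 𝕜 : Type*} [Fintype n] [RCLike 𝕜] [DecidableEq n] {A : Matrix n n 𝕜}

lemma Matrix.PosSemidef.posSemidef_sqrt (hA : A.PosSemidef) : hA.sqrt.PosSemidef := by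
  have hD : (diagonal ((↑) ∘ Real.sqrt ∘ hA.1.eigenvalues : n → 𝕜)).PosSemidef :=
    .diagonal fun _ => RCLike.ofReal_nonneg.mpr (Real.sqrt_nonneg _)
  simpa only [Matrix.PosSemidef.sqrt, star_eq_conjTranspose] using
    hD.mul_mul_conjTranspose_same (hA.1.eigenvectorUnitary : Matrix n n 𝕜)

lemma Matrix.PosSemidef.sqrt_mul_self (hA : A.PosSemidef) : hA.sqrt * hA.sqrt = A := by
  set U : Matrix n n 𝕜 := (hA.1.eigenvectorUnitary : Matrix n n 𝕜)
  have hU : (star U : Matrix n n 𝕜) * U = 1 := by simp [U]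
  have hdiag : diagonal ((↑) ∘ Real.sqrt ∘ hA.1.eigenvalues : n → 𝕜) *
        diagonal ((↑) ∘ Real.sqrt ∘ hA.1.eigenvalues) =
      diagonal ((↑) ∘ hA.1.eigenvalues) := by
    rw [diagonal_mul_diagonal]
    congr 1
    funext i
    simp only [Function.comp_apply, ← RCLike.ofReal_mul,
      Real.mul_self_sqrt (hA.eigenvalues_nonneg i)]
  conv_rhs => rw [hA.1.spectral_theorem, Unitary.conjStarAlgAut_apply]
  calc hA.sqrt * hA.sqrt
      = U * (diagonal ((↑) ∘ Real.sqrt ∘ hA.1.eigenvalues) * (star U * U) *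
          diagonal ((↑) ∘ Real.sqrt ∘ hA.1.eigenvalues)) * star U := by
        simp only [Matrix.PosSemidef.sqrt, U, Matrix.mul_assoc]
    _ = _ := by rw [hU, Matrix.mul_one, hdiag]

lemma Matrix.PosSemidef.sqrt_mulVec_eq_zero (hA : A.PosSemidef) {x : n → 𝕜}
    (hx : A *ᵥ x = 0) : hA.sqrt *ᵥ x = 0 := by
  refine dotProduct_star_self_eq_zero.mp ?_
  rw [star_mulVec, ← dotProduct_mulVec, mulVec_mulVec, hA.posSemidef_sqrt.isHermitian.eq,
    hA.sqrt_mul_self, hx, dotProduct_zero]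

lemma Matrix.PosDef.fromBlocks_zero {m n 𝕜 : Type*} [Fintype m] [Fintype n] [DecidableEq m]
    [DecidableEq n] [RCLike 𝕜] {A : Matrix m m 𝕜} {D : Matrix n n 𝕜} (hA : A.PosDef)
    (hD : D.PosDef) : (fromBlocks A 0 0 D).PosDef := by
  have := hA.isUnit.invertible
  have hpsd : (fromBlocks A 0 0 D).PosSemidef := by
    simpa using (hA.fromBlocks₁₁ 0 D).mpr (by simpa using hD.posSemidef)
  rw [hpsd.posDef_iff_isUnit, isUnit_iff_isUnit_det, det_fromBlocks_zero₂₁]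
  exact ((isUnit_iff_isUnit_det A).mp hA.isUnit).mul ((isUnit_iff_isUnit_det D).mp hD.isUnit)

end

section Riccati

lemma Matrix.PosSemidef.isSymm {ι : Type*} {P : Matrix ι ι ℝ} (hP : P.PosSemidef) :
    P.IsSymm :=
  isHermitian_iff_isSymm.mp hP.isHermitian

variable {ι m : Type*} [Fintype ι] [Fintype m]

lemma dotProduct_transpose_mul_mul_mulVec {κ : Type*} [Fintype κ] (P : Matrix ι ι ℝ)
    (M : Matrix ι κ ℝ) (v : κ → ℝ) :
    v ⬝ᵥ (Mᵀ * P * M) *ᵥ v = (M *ᵥ v) ⬝ᵥ P *ᵥ (M *ᵥ v) := by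
  rw [← mulVec_mulVec, ← mulVec_mulVec, dotProduct_mulVec, vecMul_transpose]

lemma Matrix.PosSemidef.transpose_mul_mul_same {κ : Type*} [Fintype κ] {P : Matrix ι ι ℝ}
    (hP : P.PosSemidef) (M : Matrix ι κ ℝ) : (Mᵀ * P * M).PosSemidef := by
  simpa only [conjTranspose_eq_transpose_of_trivial] using hP.conjTranspose_mul_mul_same M

lemma Matrix.PosSemidef.dotProduct_mulVec_self_nonneg {P : Matrix ι ι ℝ} (hP : P.PosSemidef)
    (v : ι → ℝ) : 0 ≤ v ⬝ᵥ P *ᵥ v := by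
  simpa only [star_trivial] using hP.dotProduct_mulVec_nonneg v

lemma Matrix.PosSemidef.mulVec_eq_zero_of_dotProduct {P : Matrix ι ι ℝ} (hP : P.PosSemidef)
    {v : ι → ℝ} (hv : v ⬝ᵥ P *ᵥ v = 0) : P *ᵥ v = 0 :=
  (hP.dotProduct_mulVec_zero_iff v).mp (by rwa [star_trivial])

lemma Matrix.PosSemidef.posDef_of_mulVec_eq_zero {P : Matrix ι ι ℝ} (hP : P.PosSemidef)
    (h : ∀ v, P *ᵥ v = 0 → v = 0) : P.PosDef := by
  refine .of_dotProduct_mulVec_pos hP.isHermitian fun v hv => ?_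
  rw [star_trivial]
  exact (hP.dotProduct_mulVec_self_nonneg v).lt_of_ne
    fun h0 => hv (h v (hP.mulVec_eq_zero_of_dotProduct h0.symm))

lemma Matrix.PosSemidef.transpose_mul_mul_add_posDef {P : Matrix ι ι ℝ} {R : Matrix m m ℝ}
    (hP : P.PosSemidef) (B : Matrix ι m ℝ) (hR : R.PosDef) : (Bᵀ * P * B + R).PosDef :=
  PosDef.posSemidef_add (hP.transpose_mul_mul_same B) hR

lemma closedLoop_cost_eq {A P : Matrix ι ι ℝ} {B : Matrix ι m ℝ} {R : Matrix m m ℝ}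
    (hP : P.IsSymm) {K : Matrix m ι ℝ} (hK : (Bᵀ * P * B + R) * K = Bᵀ * P * A) :
    (A - B * K)ᵀ * P * (A - B * K) + Kᵀ * R * K = Aᵀ * P * A - (Bᵀ * P * A)ᵀ * K := by
  have hKUK : Kᵀ * ((Bᵀ * P * B + R) * K) = Kᵀ * (Bᵀ * P * A) := by rw [hK]
  have hW : (Bᵀ * P * A)ᵀ = Aᵀ * P * B := by
    rw [transpose_mul, transpose_mul, transpose_transpose, hP.eq, Matrix.mul_assoc]
  rw [hW]
  simp only [transpose_sub, transpose_mul, Matrix.sub_mul, Matrix.mul_sub, Matrix.mul_add,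
    Matrix.add_mul, Matrix.mul_assoc] at hKUK ⊢
  rw [← hKUK]
  abel

variable [DecidableEq m]

def riccatiStep (A Q : Matrix ι ι ℝ) (B : Matrix ι m ℝ) (R : Matrix m m ℝ)
    (P : Matrix ι ι ℝ) : Matrix ι ι ℝ :=
  Aᵀ * P * A + Q - (Bᵀ * P * A)ᵀ * (Bᵀ * P * B + R)⁻¹ * (Bᵀ * P * A)

def riccatiGain (A : Matrix ι ι ℝ) (B : Matrix ι m ℝ) (R : Matrix m m ℝ)
    (P : Matrix ι ι ℝ) : Matrix m ι ℝ :=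
  (Bᵀ * P * B + R)⁻¹ * (Bᵀ * P * A)

variable {A Q P : Matrix ι ι ℝ} {B : Matrix ι m ℝ} {R : Matrix m m ℝ}

lemma riccatiStep_eq_closedLoop (hP : P.IsSymm) (hU : IsUnit (Bᵀ * P * B + R)) :
    riccatiStep A Q B R P =
      (A - B * riccatiGain A B R P)ᵀ * P * (A - B * riccatiGain A B R P) +
        (riccatiGain A B R P)ᵀ * R * riccatiGain A B R P + Q := by
  have hK := mul_nonsing_inv_cancel_left _ (Bᵀ * P * A) ((isUnit_iff_isUnit_det _).mp hU)
  rw [riccatiGain, closedLoop_cost_eq hP hK, riccatiStep,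
    Matrix.mul_assoc _ (Bᵀ * P * B + R)⁻¹]
  abel

lemma riccatiStep_posSemidef (hQ : Q.PosSemidef) (hR : R.PosDef) (hP : P.PosSemidef) :
    (riccatiStep A Q B R P).PosSemidef := by
  rw [riccatiStep_eq_closedLoop hP.isSymm (hP.transpose_mul_mul_add_posDef B hR).isUnit]
  exact ((hP.transpose_mul_mul_same _).add (hR.posSemidef.transpose_mul_mul_same _)).add hQ

lemma mulVec_eq_zero_of_riccatiStep_mulVec_eq_zero (hQ : Q.PosSemidef) (hR : R.PosDef)
    (hP : P.PosSemidef) {v : ι → ℝ} (hv : riccatiStep A Q B R P *ᵥ v = 0) :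
    Q *ᵥ v = 0 ∧ P *ᵥ (A *ᵥ v) = 0 := by
  set K := riccatiGain A B R P
  have hsum : v ⬝ᵥ ((A - B * K)ᵀ * P * (A - B * K)) *ᵥ v + v ⬝ᵥ (Kᵀ * R * K) *ᵥ v +
      v ⬝ᵥ Q *ᵥ v = 0 := by
    rw [← dotProduct_add, ← dotProduct_add, ← add_mulVec, ← add_mulVec,
      ← riccatiStep_eq_closedLoop hP.isSymm (hP.transpose_mul_mul_add_posDef B hR).isUnit, hv,
      dotProduct_zero]
  have hloop := (hP.transpose_mul_mul_same (A - B * K)).dotProduct_mulVec_self_nonneg v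
  have hgain := (hR.posSemidef.transpose_mul_mul_same K).dotProduct_mulVec_self_nonneg v
  have hstate := hQ.dotProduct_mulVec_self_nonneg v
  have hKv : K *ᵥ v = 0 := by
    by_contra hKv
    have := hR.dotProduct_mulVec_pos hKv
    rw [star_trivial, ← dotProduct_transpose_mul_mul_mulVec] at this
    linarith
  have hcl : (A - B * K) *ᵥ v = A *ᵥ v := by
    rw [sub_mulVec, ← mulVec_mulVec, hKv, mulVec_zero, sub_zero]
  have hloop0 : v ⬝ᵥ ((A - B * K)ᵀ * P * (A - B * K)) *ᵥ v = 0 := by linarith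
  rw [dotProduct_transpose_mul_mul_mulVec, hcl] at hloop0
  exact ⟨hQ.mulVec_eq_zero_of_dotProduct (by linarith), hP.mulVec_eq_zero_of_dotProduct hloop0⟩

variable {P₀ : Matrix ι ι ℝ}

lemma riccatiStep_iterate_posSemidef (hQ : Q.PosSemidef) (hR : R.PosDef)
    (hP₀ : P₀.PosSemidef) (j : ℕ) : ((riccatiStep A Q B R)^[j] P₀).PosSemidef := by
  induction j with
  | zero => exact hP₀
  | succ j ih =>
    rw [Function.iterate_succ_apply']
    exact riccatiStep_posSemidef hQ hR ih

variable [DecidableEq ι]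

lemma riccatiStep_iterate_mulVec_eq_zero (hQ : Q.PosSemidef) (hR : R.PosDef)
    (hP₀ : P₀.PosSemidef) {j : ℕ} {v : ι → ℝ}
    (hv : (riccatiStep A Q B R)^[j] P₀ *ᵥ v = 0) {i : ℕ} (hi : i < j) :
    Q *ᵥ (A ^ i *ᵥ v) = 0 := by
  induction j generalizing v i with
  | zero => omega
  | succ j ih =>
    rw [Function.iterate_succ_apply'] at hv
    obtain ⟨hQv, hAv⟩ := mulVec_eq_zero_of_riccatiStep_mulVec_eq_zero hQ hR
      (riccatiStep_iterate_posSemidef hQ hR hP₀ j) hv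
    cases i with
    | zero => simpa using hQv
    | succ i => rw [pow_succ, ← mulVec_mulVec]; exact ih hAv (by omega)

lemma riccatiStep_iterate_posDef (hQ : Q.PosSemidef) (hR : R.PosDef) (hP₀ : P₀.PosSemidef)
    {k : ℕ} (hobs : ∀ v : ι → ℝ, (∀ i < k, Q *ᵥ (A ^ i *ᵥ v) = 0) → v = 0)
    {j : ℕ} (hkj : k ≤ j) : ((riccatiStep A Q B R)^[j] P₀).PosDef :=
  (riccatiStep_iterate_posSemidef hQ hR hP₀ j).posDef_of_mulVec_eq_zero fun v hv =>
    hobs v fun _ hi => riccatiStep_iterate_mulVec_eq_zero hQ hR hP₀ hv (hi.trans_le hkj)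

end Riccati

namespace NCS13

namespace Sys

variable {n mL mR : ℕ} (S : Sys n mL mR)

lemma Rc_posDef (hRL : S.RL.PosDef) (hRR : S.RR.PosDef) : S.Rc.PosDef :=
  hRL.fromBlocks_zero hRR

lemma Zstep_eq_riccatiStep (hRL : S.RL.PosDef) (hRR : S.RR.PosDef)
    {Z : Matrix (Fin n) (Fin n) ℝ} (hZ : Z.PosSemidef) :
    S.Zstep Z = riccatiStep S.A S.Q S.Bc S.Rc Z := by
  have hU : (S.Ups Z).PosDef := hZ.transpose_mul_mul_add_posDef S.Bc (S.Rc_posDef hRL hRR)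
  have hUK := mul_nonsing_inv_cancel_left _ (S.Bcᵀ * Z * S.A)
    ((isUnit_iff_isUnit_det _).mp hU.isUnit)
  rw [Zstep, riccatiStep, Kg, transpose_mul, transpose_nonsing_inv, hU.posSemidef.isSymm.eq,
    Matrix.mul_assoc _ (S.Ups Z), hUK, Ups]

lemma ZX_fst_eq_iterate (hRL : S.RL.PosDef) (hRR : S.RR.PosDef) (hQ : S.Q.PosSemidef)
    (j : ℕ) : (S.ZX 0 j).1 = (riccatiStep S.A S.Q S.Bc S.Rc)^[j] 0 := by
  induction j with
  | zero => rfl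
  | succ j ih =>
    rw [Function.iterate_succ_apply', ← ih]
    exact S.Zstep_eq_riccatiStep hRL hRR
      (ih ▸ riccatiStep_iterate_posSemidef hQ (S.Rc_posDef hRL hRR) .zero j)

lemma Psi_posSemidef (hp0 : 0 ≤ S.p) (hp1 : S.p ≤ 1) {Z X : Matrix (Fin n) (Fin n) ℝ}
    (hZ : Z.PosSemidef) (hX : X.PosSemidef) : (S.Psi Z X).PosSemidef :=
  (hZ.smul (sub_nonneg.mpr hp1)).add (hX.smul hp0)

lemma Psi_posDef (hp0 : 0 ≤ S.p) (hp1 : S.p < 1) {Z X : Matrix (Fin n) (Fin n) ℝ}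
    (hZ : Z.PosDef) (hX : X.PosSemidef) : (S.Psi Z X).PosDef :=
  (hZ.smul (sub_pos.mpr hp1)).add_posSemidef (hX.smul hp0)

lemma Psi_of_p_eq_one (hp : S.p = 1) (Z X : Matrix (Fin n) (Fin n) ℝ) : S.Psi Z X = X := by
  simp [Psi, hp]

lemma ZX_snd_posSemidef (hRL : S.RL.PosDef) (hRR : S.RR.PosDef) (hQ : S.Q.PosSemidef)
    (hp0 : 0 ≤ S.p) (hp1 : S.p ≤ 1) (j : ℕ) : (S.ZX 0 j).2.PosSemidef := by
  induction j with
  | zero => exact .zero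
  | succ j ih =>
    have hZ : (S.ZX 0 j).1.PosSemidef := S.ZX_fst_eq_iterate hRL hRR hQ j ▸
      riccatiStep_iterate_posSemidef hQ (S.Rc_posDef hRL hRR) .zero j
    exact riccatiStep_posSemidef hQ hRL (S.Psi_posSemidef hp0 hp1 hZ ih)

lemma ZX_snd_eq_iterate_of_p_eq_one (hp : S.p = 1) (j : ℕ) :
    (S.ZX 0 j).2 = (riccatiStep S.A S.Q S.BL S.RL)^[j] 0 := by
  induction j with
  | zero => rfl
  | succ j ih =>
    rw [Function.iterate_succ_apply', ← ih]
    exact congrArg S.Xstep (S.Psi_of_p_eq_one hp _ _)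

end Sys

/-- In the setting of the finite-horizon Riccati recursion with zero
terminal value, if in addition `Q = C′C` with `(A, Q^{1/2})` observable, then there is
an integer `N₀ ≥ 0` such that `Ψ_0(N₀) = (1−p)Z_0(N₀) + pX_0(N₀)` is positive definite
(and hence, by monotonicity, `Ψ_0(N) > 0` for all `N ≥ N₀`). -/
theorem riccati_psi_eventually_posdef {n mL mR : ℕ} (S : Sys n mL mR)
    (hQ : S.Q.PosSemidef) (hRL : S.RL.PosDef) (hRR : S.RR.PosDef)
    (hp0 : 0 ≤ S.p) (hp1 : S.p ≤ 1)
    (hobs : ∀ v : Fin n → ℝ,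
      (∀ j : ℕ, j < n → (hQ.sqrt * S.A ^ j) *ᵥ v = 0) → v = 0) :
    ∃ N0 : ℕ, ∀ N : ℕ, N0 ≤ N →
      (S.Psi (S.ZX 0 (N + 1)).1 (S.ZX 0 (N + 1)).2).PosDef := by
  have hobsQ : ∀ v, (∀ i < n, S.Q *ᵥ (S.A ^ i *ᵥ v) = 0) → v = 0 := fun v hv =>
    hobs v fun i hi => by rw [← mulVec_mulVec]; exact hQ.sqrt_mulVec_eq_zero (hv i hi)
  refine ⟨n, fun N hN => ?_⟩
  rcases hp1.eq_or_lt with hp | hp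
  · rw [S.Psi_of_p_eq_one hp, S.ZX_snd_eq_iterate_of_p_eq_one hp]
    exact riccatiStep_iterate_posDef hQ hRL .zero hobsQ (by omega)
  · refine S.Psi_posDef hp0 hp ?_ (S.ZX_snd_posSemidef hRL hRR hQ hp0 hp1 (N + 1))
    rw [S.ZX_fst_eq_iterate hRL hRR hQ]
    exact riccatiStep_iterate_posDef hQ (S.Rc_posDef hRL hRR) .zero hobsQ (by omega)

end NCS13
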